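/- arXiv:2307.00148 — 5 statements merged into one kernel-verified Lean document; each statement's English description precedes it below -/
import Mathlib

section
/- Let n ≥ 1 and let f : D → ℂ satisfy ∂ⁿf/∂z̄ⁿ = 0 on the unit disk D (with all Wirtinger derivatives existing in the smooth sense). Define w(z) = w₀(z) − Σ_{k=1}^{n} ((−1)^k/k!)·conj(z)^k·(∂^{k−1}f/∂z̄^{k−1})(z) where w₀ is holomorphic on D. Then ∂w/∂z̄ = f on D. -/
open Complex Metric Finset

/-- The Wirtinger derivative ∂/∂z̄ = (1/2)(∂/∂x + i ∂/∂y). -/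
noncomputable def wirtingerBar (f : ℂ → ℂ) : ℂ → ℂ :=
  fun z => (1 / 2) * (fderiv ℝ f z 1 + Complex.I * fderiv ℝ f z Complex.I)

lemma wb_congr {f g : ℂ → ℂ} {z : ℂ} (h : f =ᶠ[nhds z] g) :
    wirtingerBar f z = wirtingerBar g z := by
  simp only [wirtingerBar, h.fderiv_eq]

lemma wb_mul {u v : ℂ → ℂ} {z : ℂ} (hu : DifferentiableAt ℝ u z)
    (hv : DifferentiableAt ℝ v z) :
    wirtingerBar (fun z => u z * v z) z
      = wirtingerBar u z * v z + u z * wirtingerBar v z := by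
  simp only [wirtingerBar, fderiv_fun_mul hu hv, ContinuousLinearMap.add_apply,
    ContinuousLinearMap.smul_apply, smul_eq_mul]
  ring

lemma wb_conj (z : ℂ) : wirtingerBar (fun z => (starRingEnd ℂ) z) z = 1 := by
  have h : fderiv ℝ (fun z : ℂ => (starRingEnd ℂ) z) z = Complex.conjCLE.toContinuousLinearMap := by
    exact Complex.conjCLE.fderiv (x := z)
  simp [wirtingerBar, h, Complex.conjCLE_apply]
  norm_num [Complex.ext_iff]

lemma wb_holo {g : ℂ → ℂ} {z : ℂ} (hg : DifferentiableAt ℂ g z) :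
    wirtingerBar g z = 0 := by
  have h := hg.hasFDerivAt.restrictScalars ℝ
  have hf : fderiv ℝ g z = (fderiv ℂ g z).restrictScalars ℝ := h.fderiv
  have hI : (fderiv ℂ g z) Complex.I = Complex.I * (fderiv ℂ g z) 1 := by
    have := (fderiv ℂ g z).map_smul Complex.I (1 : ℂ)
    simpa [smul_eq_mul] using this
  simp only [wirtingerBar, hf, ContinuousLinearMap.coe_restrictScalars', hI]
  rw [← mul_assoc, Complex.I_mul_I]
  ring

lemma wb_conj_pow (k : ℕ) (z : ℂ) :
    wirtingerBar (fun z => ((starRingEnd ℂ) z) ^ (k + 1)) z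
      = (k + 1) * ((starRingEnd ℂ) z) ^ k := by
  induction k with
  | zero => simpa using wb_conj z
  | succ m ih =>
    have hd : DifferentiableAt ℝ (fun z : ℂ => ((starRingEnd ℂ) z) ^ (m + 1)) z :=
      (Complex.conjCLE.differentiableAt).pow _
    have hc : DifferentiableAt ℝ (fun z : ℂ => (starRingEnd ℂ) z) z :=
      Complex.conjCLE.differentiableAt
    have := wb_mul (u := fun z => ((starRingEnd ℂ) z) ^ (m + 1))
      (v := fun z => (starRingEnd ℂ) z) hd hc
    simp only [← pow_succ] at this
    rw [this, ih, wb_conj]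
    push_cast
    ring

lemma wb_sub {u v : ℂ → ℂ} {z : ℂ} (hu : DifferentiableAt ℝ u z)
    (hv : DifferentiableAt ℝ v z) :
    wirtingerBar (fun z => u z - v z) z = wirtingerBar u z - wirtingerBar v z := by
  simp only [wirtingerBar, fderiv_fun_sub hu hv, ContinuousLinearMap.sub_apply]
  ring

lemma wb_sum {ι : Type*} {s : Finset ι} {A : ι → ℂ → ℂ} {z : ℂ}
    (h : ∀ i ∈ s, DifferentiableAt ℝ (A i) z) :
    wirtingerBar (fun z => ∑ i ∈ s, A i z) z = ∑ i ∈ s, wirtingerBar (A i) z := by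
  simp only [wirtingerBar, fderiv_fun_sum h, ContinuousLinearMap.sum_apply,
    Finset.mul_sum, ← Finset.sum_add_distrib]

lemma smooth_wb_iter (f : ℂ → ℂ) (hf : ContDiffOn ℝ (⊤ : ℕ∞) f (ball (0:ℂ) 1)) (k : ℕ) :
    ContDiffOn ℝ (⊤ : ℕ∞) (wirtingerBar^[k] f) (ball (0:ℂ) 1) := by
  induction k with
  | zero => simpa using hf
  | succ m ih =>
    rw [Function.iterate_succ_apply']
    have hd : ContDiffOn ℝ (⊤ : ℕ∞) (fderiv ℝ (wirtingerBar^[m] f)) (ball (0:ℂ) 1) :=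
      ih.fderiv_of_isOpen isOpen_ball (by simp)
    have h1 : ContDiffOn ℝ (⊤ : ℕ∞) (fun z => fderiv ℝ (wirtingerBar^[m] f) z 1) (ball (0:ℂ) 1) :=
      hd.clm_apply contDiffOn_const
    have h2 : ContDiffOn ℝ (⊤ : ℕ∞) (fun z => fderiv ℝ (wirtingerBar^[m] f) z Complex.I)
        (ball (0:ℂ) 1) := hd.clm_apply contDiffOn_const
    exact contDiffOn_const.mul (h1.add (contDiffOn_const.mul h2))

lemma wb_const_mul {g : ℂ → ℂ} {z c : ℂ} (hg : DifferentiableAt ℝ g z) :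
    wirtingerBar (fun z => c * g z) z = c * wirtingerBar g z := by
  simp only [wirtingerBar, fderiv_const_mul hg, ContinuousLinearMap.smul_apply, smul_eq_mul]
  ring

theorem representation_solves_dbar (n : ℕ) (hn : 1 ≤ n) (f w₀ w : ℂ → ℂ)
    (hfsmooth : ContDiffOn ℝ (⊤ : ℕ∞) f (ball (0 : ℂ) 1))
    (hpoly : ∀ z ∈ ball (0 : ℂ) 1, (wirtingerBar^[n] f) z = 0)
    (hw₀ : DifferentiableOn ℂ w₀ (ball (0 : ℂ) 1))
    (hw : ∀ z ∈ ball (0 : ℂ) 1,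
      w z = w₀ z - ∑ k ∈ Finset.Icc 1 n,
        ((-1 : ℂ) ^ k / (k.factorial : ℂ)) * ((starRingEnd ℂ) z) ^ k
          * (wirtingerBar^[k - 1] f) z) :
    ∀ z ∈ ball (0 : ℂ) 1, wirtingerBar w z = f z := by
  intro z hz
  have hzn : ball (0:ℂ) 1 ∈ nhds z := isOpen_ball.mem_nhds hz
  have hgd : ∀ k, DifferentiableAt ℝ (wirtingerBar^[k] f) z := fun k =>
    ((smooth_wb_iter f hfsmooth k).differentiableOn (by simp)).differentiableAt hzn
  have hconjd : ∀ k : ℕ, DifferentiableAt ℝ (fun z : ℂ => ((starRingEnd ℂ) z) ^ k) z :=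
    fun k => (Complex.conjCLE.differentiableAt).pow k
  set A : ℕ → ℂ → ℂ := fun k z =>
    ((-1 : ℂ) ^ k / (k.factorial : ℂ)) * (((starRingEnd ℂ) z) ^ k * (wirtingerBar^[k-1] f) z)
    with hA
  have hAd : ∀ k ∈ Finset.Icc 1 n, DifferentiableAt ℝ (A k) z := fun k _ =>
    (differentiableAt_const _).mul ((hconjd k).mul (hgd (k-1)))
  have heq : w =ᶠ[nhds z] fun z => w₀ z - ∑ k ∈ Finset.Icc 1 n, A k z := by
    refine Filter.eventuallyEq_of_mem hzn fun x hx => ?_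
    rw [hw x hx]
    simp only [hA, mul_assoc]
  rw [wb_congr heq]
  have hw₀d : DifferentiableAt ℂ w₀ z := hw₀.differentiableAt hzn
  have hSd : DifferentiableAt ℝ (fun z => ∑ k ∈ Finset.Icc 1 n, A k z) z :=
    DifferentiableAt.fun_sum hAd
  rw [wb_sub (hw₀d.restrictScalars ℝ) hSd, wb_holo hw₀d, wb_sum hAd]
  set T : ℕ → ℂ := fun k => ((-1:ℂ)^k / (((k-1).factorial : ℕ) : ℂ))
    * ((starRingEnd ℂ) z)^(k-1) * (wirtingerBar^[k-1] f) z with hT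
  have hAk : ∀ k ∈ Finset.Icc 1 n, wirtingerBar (A k) z = T k - T (k+1) := by
    intro k hk
    have hk1 : 1 ≤ k := (Finset.mem_Icc.1 hk).1
    obtain ⟨m, rfl⟩ : ∃ m, k = m + 1 := ⟨k - 1, by omega⟩
    have h1 : wirtingerBar (A (m+1)) z
        = ((-1 : ℂ) ^ (m+1) / ((m+1).factorial : ℂ))
          * wirtingerBar (fun z => ((starRingEnd ℂ) z) ^ (m+1)
              * (wirtingerBar^[m] f) z) z := by
      simp only [hA, Nat.add_sub_cancel]
      exact wb_const_mul ((hconjd (m+1)).mul (hgd m))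
    rw [h1, wb_mul (hconjd (m+1)) (hgd m), wb_conj_pow]
    rw [show wirtingerBar (wirtingerBar^[m] f) z = (wirtingerBar^[m+1] f) z from
      (Function.iterate_succ_apply' wirtingerBar m f ▸ rfl)]
    simp only [hT, Nat.add_sub_cancel]
    have hfac : ((m+1).factorial : ℂ) = ((m+1 : ℕ) : ℂ) * (m.factorial : ℂ) := by
      rw [Nat.factorial_succ]; push_cast; ring
    have hm0 : (m.factorial : ℂ) ≠ 0 := Nat.cast_ne_zero.2 m.factorial_ne_zero
    have hm1 : ((m+1).factorial : ℂ) ≠ 0 := Nat.cast_ne_zero.2 (m+1).factorial_ne_zero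
    rw [hfac]
    have hm2 : ((m:ℂ) + 1) ≠ 0 := by
      have : ((m+1:ℕ):ℂ) ≠ 0 := Nat.cast_ne_zero.2 (Nat.succ_ne_zero m)
      push_cast at this; exact this
    push_cast
    field_simp
    ring
  rw [Finset.sum_congr rfl hAk]
  have htel : ∀ N : ℕ, ∑ k ∈ Finset.Icc 1 N, (T k - T (k+1)) = T 1 - T (N+1) := by
    intro N
    induction N with
    | zero => simp
    | succ p ih => rw [Finset.sum_Icc_succ_top (by omega), ih]; ring
  rw [htel n]
  clear htel
  have hTn : T (n+1) = 0 := by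
    simp only [hT, Nat.add_sub_cancel, hpoly z hz, mul_zero]
  have hT1 : T 1 = -f z := by
    simp [hT]
  rw [hTn, hT1]
  ring
end

section
/- Let m ≥ 2 and let f₀, f₁, …, f_{m−1} : D → ℂ be smooth functions on the unit disk with f₀ ≡ 0 and ∂f_k/∂z̄ = f_{k−1} for 1 ≤ k ≤ m−1. Then the function g(z) := −Σ_{ℓ=1}^{m−1} ((−1)^ℓ/ℓ!)·conj(z)^ℓ·f_{m−ℓ}(z) satisfies ∂g/∂z̄ = f_{m−1} on D. -/
open Complex Metric Finset

noncomputable def conjCLM : ℂ →L[ℝ] ℂ := Complex.conjCLE.toContinuousLinearMap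

@[simp] lemma conjCLM_apply (w : ℂ) : conjCLM w = (starRingEnd ℂ) w := by
  simp [conjCLM]

lemma conj_eq_clm : (fun w : ℂ => (starRingEnd ℂ) w) = ⇑conjCLM := by
  ext w; simp [conjCLM]

lemma hasFDerivAt_conj (z : ℂ) :
    HasFDerivAt (fun w : ℂ => (starRingEnd ℂ) w) conjCLM z := by
  rw [conj_eq_clm]; exact conjCLM.hasFDerivAt

lemma hasFDerivAt_conj_pow (ℓ : ℕ) (z : ℂ) :
    HasFDerivAt (fun w : ℂ => ((starRingEnd ℂ) w) ^ ℓ)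
      ((((ℓ : ℂ) * ((starRingEnd ℂ) z) ^ (ℓ - 1))) • conjCLM) z := by
  induction ℓ with
  | zero =>
      have h0 := (hasFDerivAt_const (1 : ℂ) z : HasFDerivAt _ (0 : ℂ →L[ℝ] ℂ) z)
      convert h0 using 2
      simp
      simp
  | succ n ih =>
      have h2 := ih.fun_mul (hasFDerivAt_conj z)
      simp only [← pow_succ] at h2
      refine h2.congr_fderiv (Eq.symm ?_)
      ext w
      simp only [ContinuousLinearMap.smul_apply, ContinuousLinearMap.add_apply,
        smul_eq_mul]
      rcases n with _ | k
      · simp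
      · have hk : k + 1 - 1 = k := rfl
        rw [hk]
        push_cast
        rw [pow_succ]
        ring

theorem telescoping_dbar (m : ℕ) (hm : 2 ≤ m) (f : ℕ → ℂ → ℂ)
    (hsmooth : ∀ k ≤ m - 1, ContDiffOn ℝ (⊤ : ℕ∞) (f k) (ball (0 : ℂ) 1))
    (hf0 : ∀ z, f 0 z = 0)
    (hrec : ∀ k, 1 ≤ k → k ≤ m - 1 → ∀ z ∈ ball (0 : ℂ) 1,
      wirtingerBar (f k) z = f (k - 1) z)
    (g : ℂ → ℂ)
    (hg : ∀ z, g z = -∑ ℓ ∈ Finset.Icc 1 (m - 1),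
      ((-1 : ℂ) ^ ℓ / (ℓ.factorial : ℂ)) * ((starRingEnd ℂ) z) ^ ℓ * f (m - ℓ) z) :
    ∀ z ∈ ball (0 : ℂ) 1, wirtingerBar g z = f (m - 1) z := by
  intro z hz
  set c : ℕ → ℂ := fun ℓ => (-1 : ℂ) ^ ℓ / (ℓ.factorial : ℂ) with hc
  -- differentiability of the f k at z
  have hdiffAt : ∀ k ≤ m - 1, DifferentiableAt ℝ (f k) z := by
    intro k hk
    exact ((hsmooth k hk).contDiffAt (isOpen_ball.mem_nhds hz)).differentiableAt (by simp)
  -- derivative of each summand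
  set D : ℕ → (ℂ →L[ℝ] ℂ) := fun ℓ =>
    (c ℓ * ((starRingEnd ℂ) z) ^ ℓ) • fderiv ℝ (f (m - ℓ)) z
      + f (m - ℓ) z • (c ℓ • ((((ℓ : ℂ) * ((starRingEnd ℂ) z) ^ (ℓ - 1))) • conjCLM)) with hD
  have hter : ∀ ℓ ∈ Finset.Icc 1 (m - 1),
      HasFDerivAt (fun w => c ℓ * ((starRingEnd ℂ) w) ^ ℓ * f (m - ℓ) w) (D ℓ) z := by
    intro ℓ hℓ
    rw [Finset.mem_Icc] at hℓ
    have hml : m - ℓ ≤ m - 1 := by omega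
    exact ((hasFDerivAt_conj_pow ℓ z).const_mul (c ℓ)).mul (hdiffAt (m - ℓ) hml).hasFDerivAt
  have hgfun : g = fun w => -∑ ℓ ∈ Finset.Icc 1 (m - 1),
      c ℓ * ((starRingEnd ℂ) w) ^ ℓ * f (m - ℓ) w := funext hg
  have hG : HasFDerivAt g (-∑ ℓ ∈ Finset.Icc 1 (m - 1), D ℓ) z := by
    rw [hgfun]; exact (HasFDerivAt.fun_sum hter).neg
  -- the telescoping function
  set B : ℕ → ℂ := fun j => c j * ((starRingEnd ℂ) z) ^ j * f (m - j - 1) z with hB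
  have key : ∀ ℓ ∈ Finset.Icc 1 (m - 1),
      (1 / 2 : ℂ) * ((D ℓ) 1 + Complex.I * (D ℓ) Complex.I) = B ℓ - B (ℓ - 1) := by
    intro ℓ hℓ
    rw [Finset.mem_Icc] at hℓ
    obtain ⟨j, rfl⟩ : ∃ j, ℓ = j + 1 := ⟨ℓ - 1, by omega⟩
    have h1 : 1 ≤ m - (j + 1) := by omega
    have h2 : m - (j + 1) ≤ m - 1 := by omega
    have hw := hrec (m - (j + 1)) h1 h2 z hz
    rw [wirtingerBar] at hw
    have hidx : m - j - 1 = m - (j + 1) := by omega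
    simp only [hD, hB, ContinuousLinearMap.add_apply, ContinuousLinearMap.smul_apply,
      smul_eq_mul, conjCLM_apply, map_one, Complex.conj_I, Nat.add_sub_cancel, hidx, hc,
      ← hw]
    have hfac : (((j+1).factorial : ℕ) : ℂ) = ((j:ℂ)+1) * (j.factorial : ℂ) := by
      push_cast [Nat.factorial_succ]; ring
    have hne : ((j.factorial : ℕ) : ℂ) ≠ 0 := by
      exact_mod_cast Nat.cast_ne_zero.mpr (Nat.factorial_ne_zero j)
    have hne1 : ((j:ℂ) + 1) ≠ 0 := Nat.cast_add_one_ne_zero j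
    rw [hfac]
    push_cast
    field_simp
    ring_nf
    simp only [Complex.I_sq]
    ring
  have step1 : wirtingerBar g z = -∑ ℓ ∈ Finset.Icc 1 (m - 1), (B ℓ - B (ℓ - 1)) := by
    have : wirtingerBar g z
        = (1 / 2 : ℂ) * ((-∑ ℓ ∈ Finset.Icc 1 (m - 1), D ℓ) 1
            + Complex.I * (-∑ ℓ ∈ Finset.Icc 1 (m - 1), D ℓ) Complex.I) := by
      rw [wirtingerBar, hG.fderiv]
    rw [this]
    simp only [ContinuousLinearMap.neg_apply, ContinuousLinearMap.sum_apply]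
    rw [← Finset.sum_congr rfl key, ← Finset.mul_sum, Finset.sum_add_distrib, ← Finset.mul_sum]
    ring
  have htel : ∑ ℓ ∈ Finset.Icc 1 (m - 1), (B ℓ - B (ℓ - 1)) = B (m - 1) - B 0 := by
    rw [show Finset.Icc 1 (m - 1) = Finset.Ico 1 m by
      rw [← Finset.Ico_add_one_right_eq_Icc]; congr 1; omega]
    rw [Finset.sum_Ico_eq_sum_range]
    have : ∀ i ∈ Finset.range (m - 1), (B (1 + i) - B (1 + i - 1)) = B (i + 1) - B i := by
      intro i _
      congr 2 <;> omega
    rw [Finset.sum_congr rfl this, Finset.sum_range_sub]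
  have hB0 : B 0 = f (m - 1) z := by simp [hB, hc]
  have hBtop : B (m - 1) = 0 := by
    have h0 : m - (m - 1) - 1 = 0 := by omega
    rw [hB]
    simp only [h0, hf0, mul_zero]
  rw [step1, htel, hBtop, hB0]
  ring
end

section
/- Let f be holomorphic on ℂ₊ with |f(x+iy)| ≤ C/y^N for some C > 0, integer N ≥ 0, and all x + iy ∈ ℂ₊. Then f admits a boundary value in the sense of distributions: for every smooth compactly supported φ : ℝ → ℂ, the limit lim_{y→0⁺} ∫_{−∞}^{∞} f(x + iy) φ(x) dx exists. -/
open Complex Filter MeasureTheory Set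
open scoped ContDiff

namespace TGBV

noncomputable def J (f : ℂ → ℂ) (ψ : ℝ → ℂ) (y : ℝ) : ℂ :=
  ∫ x : ℝ, f (x + y * Complex.I) * ψ x

lemma isOpenU : IsOpen {z : ℂ | 0 < z.im} := isOpen_lt continuous_const Complex.continuous_im

lemma memU (x y : ℝ) (hy : 0 < y) : ((x : ℂ) + y * Complex.I) ∈ {z : ℂ | 0 < z.im} := by
  simp [hy]

lemma cont_path (y : ℝ) : Continuous fun x : ℝ => ((x : ℂ) + y * Complex.I) := by
  fun_prop

lemma cont_path2 : Continuous fun p : ℝ × ℝ => ((p.1 : ℂ) + p.2 * Complex.I) := by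
  fun_prop

variable {f : ℂ → ℂ}

lemma cont_df (hf : DifferentiableOn ℂ f {z : ℂ | 0 < z.im}) :
    ContinuousOn (deriv f) {z : ℂ | 0 < z.im} :=
  ((hf.analyticOnNhd isOpenU).deriv).continuousOn

lemma cont_slice {g : ℂ → ℂ} (hg : ContinuousOn g {z : ℂ | 0 < z.im}) {y : ℝ} (hy : 0 < y) :
    Continuous fun x : ℝ => g ((x : ℂ) + y * Complex.I) :=
  hg.comp_continuous (cont_path y) fun x => memU x y hy

lemma integrable_slice {g : ℂ → ℂ} (hg : ContinuousOn g {z : ℂ | 0 < z.im})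
    {ψ : ℝ → ℂ} (hψc : Continuous ψ) (hψs : HasCompactSupport ψ) {y : ℝ} (hy : 0 < y) :
    Integrable fun x : ℝ => g ((x : ℂ) + y * Complex.I) * ψ x :=
  ((cont_slice hg hy).mul hψc).integrable_of_hasCompactSupport hψs.mul_left


variable {f : ℂ → ℂ}

lemma im_path (x y : ℝ) : ((x : ℂ) + y * Complex.I).im = y := by simp

lemma Jbound {C : ℝ} {N : ℕ}
    (hbound : ∀ z : ℂ, 0 < z.im → ‖f z‖ ≤ C / z.im ^ N)
    (hfc : ContinuousOn f {z : ℂ | 0 < z.im})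
    {ψ : ℝ → ℂ} (hψc : Continuous ψ) (hψs : HasCompactSupport ψ) {y : ℝ} (hy : 0 < y) :
    ‖∫ x : ℝ, f ((x:ℂ) + y * Complex.I) * ψ x‖ ≤ (C / y ^ N) * ∫ x : ℝ, ‖ψ x‖ := by
  calc ‖∫ x : ℝ, f ((x:ℂ) + y * Complex.I) * ψ x‖
      ≤ ∫ x : ℝ, ‖f ((x:ℂ) + y * Complex.I) * ψ x‖ := norm_integral_le_integral_norm _
    _ ≤ ∫ x : ℝ, (C / y ^ N) * ‖ψ x‖ := by
        apply integral_mono ((integrable_slice hfc hψc hψs hy).norm)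
          ((hψc.integrable_of_hasCompactSupport hψs).norm.const_mul _)
        intro x
        simp only []
        rw [norm_mul]
        apply mul_le_mul_of_nonneg_right _ (norm_nonneg _)
        have := hbound ((x:ℂ) + y * Complex.I) (by simpa using hy)
        rw [im_path x y] at this
        exact this
    _ = (C / y ^ N) * ∫ x : ℝ, ‖ψ x‖ := by rw [integral_const_mul]

lemma hasDerivAt_vert (hf : DifferentiableOn ℂ f {z : ℂ | 0 < z.im}) (x : ℝ) {t : ℝ} (ht : 0 < t) :
    HasDerivAt (fun t : ℝ => f ((x:ℂ) + t * Complex.I))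
      (Complex.I * deriv f ((x:ℂ) + t * Complex.I)) t := by
  have h1 : HasDerivAt (fun t : ℝ => ((x:ℂ) + t * Complex.I)) Complex.I t := by
    simpa using ((Complex.ofRealCLM.hasDerivAt (x := t)).mul_const Complex.I).const_add (x:ℂ)
  have h2 : HasDerivAt f (deriv f ((x:ℂ) + t * Complex.I)) ((x:ℂ) + t * Complex.I) :=
    (hf.differentiableAt (isOpenU.mem_nhds (memU x t ht))).hasDerivAt
  simpa [smul_eq_mul, Function.comp_def] using h2.scomp (x := t) (h := fun t : ℝ => ((x:ℂ) + t * Complex.I)) h1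

lemma hasDerivAt_horiz (hf : DifferentiableOn ℂ f {z : ℂ | 0 < z.im}) {t : ℝ} (ht : 0 < t) (x : ℝ) :
    HasDerivAt (fun x : ℝ => f ((x:ℂ) + t * Complex.I))
      (deriv f ((x:ℂ) + t * Complex.I)) x := by
  have h1 : HasDerivAt (fun x : ℝ => ((x:ℂ) + t * Complex.I)) 1 x := by
    simpa using (Complex.ofRealCLM.hasDerivAt (x := x)).add_const ((t:ℂ) * Complex.I)
  have h2 : HasDerivAt f (deriv f ((x:ℂ) + t * Complex.I)) ((x:ℂ) + t * Complex.I) :=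
    (hf.differentiableAt (isOpenU.mem_nhds (memU x t ht))).hasDerivAt
  simpa [smul_eq_mul, Function.comp_def] using h2.scomp (x := x) (h := fun x : ℝ => ((x:ℂ) + t * Complex.I)) h1


lemma ibp (hf : DifferentiableOn ℂ f {z : ℂ | 0 < z.im})
    {ψ : ℝ → ℂ} (hψ : ContDiff ℝ (∞ : WithTop ℕ∞) ψ) (hψs : HasCompactSupport ψ)
    {t : ℝ} (ht : 0 < t) :
    ∫ x : ℝ, deriv f ((x:ℂ) + t * Complex.I) * ψ x
      = - ∫ x : ℝ, f ((x:ℂ) + t * Complex.I) * deriv ψ x := by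
  have hψc : Continuous ψ := hψ.continuous
  have hdψ : ContDiff ℝ (∞ : WithTop ℕ∞) (deriv ψ) := (contDiff_infty_iff_deriv.mp hψ).2
  have hdψc : Continuous (deriv ψ) := hdψ.continuous
  have h := MeasureTheory.integral_mul_deriv_eq_deriv_mul_of_integrable
    (u := fun x : ℝ => f ((x:ℂ) + t * Complex.I)) (v := ψ)
    (u' := fun x : ℝ => deriv f ((x:ℂ) + t * Complex.I)) (v' := deriv ψ)
    (fun x _ => hasDerivAt_horiz hf ht x)
    (fun x _ => ((hψ.differentiable (by simp)).differentiableAt).hasDerivAt)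
    (integrable_slice hf.continuousOn hdψc hψs.deriv ht)
    (integrable_slice (cont_df hf) hψc hψs ht)
    (integrable_slice hf.continuousOn hψc hψs ht)
  rw [h, neg_neg]

lemma key (hf : DifferentiableOn ℂ f {z : ℂ | 0 < z.im})
    {ψ : ℝ → ℂ} (hψ : ContDiff ℝ (∞ : WithTop ℕ∞) ψ) (hψs : HasCompactSupport ψ)
    {a b : ℝ} (ha : 0 < a) (hab : a ≤ b) :
    J f ψ a = J f ψ b + Complex.I * ∫ t in a..b, J f (deriv ψ) t := by
  have hψc : Continuous ψ := hψ.continuous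
  -- pointwise FTC along vertical segments
  have hsub : ∀ x : ℝ, f ((x:ℂ) + b * Complex.I) * ψ x - f ((x:ℂ) + a * Complex.I) * ψ x
      = ∫ t in a..b, (Complex.I * deriv f ((x:ℂ) + t * Complex.I)) * ψ x := by
    intro x
    have hint : IntervalIntegrable
        (fun t : ℝ => Complex.I * deriv f ((x:ℂ) + t * Complex.I)) volume a b := by
      apply ContinuousOn.intervalIntegrable
      refine continuousOn_const.mul ?_
      refine (cont_df hf).comp ((by fun_prop : Continuous fun t : ℝ => ((x:ℂ) + t * Complex.I)).continuousOn) fun t htt => ?_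
      rw [uIcc_of_le hab] at htt
      exact memU x t (lt_of_lt_of_le ha htt.1)
    have ftc := intervalIntegral.integral_eq_sub_of_hasDerivAt
      (f := fun t : ℝ => f ((x:ℂ) + t * Complex.I))
      (f' := fun t : ℝ => Complex.I * deriv f ((x:ℂ) + t * Complex.I))
      (fun t htt => by
        rw [uIcc_of_le hab] at htt
        exact hasDerivAt_vert hf x (lt_of_lt_of_le ha htt.1)) hint
    beta_reduce at ftc
    rw [← sub_mul, ← ftc, intervalIntegral.integral_mul_const]
  -- integrability on the product for Fubini
  have hSU : (fun p : ℝ × ℝ => ((p.1 : ℂ) + p.2 * Complex.I)) '' (tsupport ψ ×ˢ Icc a b)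
      ⊆ {z : ℂ | 0 < z.im} := by
    rintro z ⟨⟨x, t⟩, ⟨hx, htt⟩, rfl⟩
    exact memU x t (lt_of_lt_of_le ha htt.1)
  obtain ⟨M, hM⟩ := ((IsCompact.prod hψs
    isCompact_Icc).image cont_path2).exists_bound_of_continuousOn ((cont_df hf).mono hSU)
  have hFint : Integrable
      (Function.uncurry fun x t : ℝ => (Complex.I * deriv f ((x:ℂ) + t * Complex.I)) * ψ x)
      (volume.prod (volume.restrict (Ioc a b))) := by
    have hmeas : AEStronglyMeasurable
        (Function.uncurry fun x t : ℝ => (Complex.I * deriv f ((x:ℂ) + t * Complex.I)) * ψ x)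
        (volume.prod (volume.restrict (Ioc a b))) := by
      have hm : Measurable fun p : ℝ × ℝ =>
          (Complex.I * deriv f ((p.1:ℂ) + p.2 * Complex.I)) * ψ p.1 :=
        (measurable_const.mul ((measurable_deriv f).comp cont_path2.measurable)).mul
          (hψc.measurable.comp measurable_fst)
      exact hm.aestronglyMeasurable
    have hbd : Integrable (fun p : ℝ × ℝ => (M * ‖ψ p.1‖) * (1:ℝ))
        (volume.prod (volume.restrict (Ioc a b))) := by
      exact Integrable.mul_prod ((hψc.integrable_of_hasCompactSupport hψs).norm.const_mul M)
        ((integrableOn_const measure_Ioc_lt_top.ne))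
    refine Integrable.mono' (g := fun p : ℝ × ℝ => M * ‖ψ p.1‖) (by simpa using hbd) hmeas ?_
    have : (volume : Measure ℝ).prod (volume.restrict (Ioc a b))
        = ((volume : Measure ℝ).prod (volume : Measure ℝ)).restrict ((univ : Set ℝ) ×ˢ Ioc a b) := by
      rw [← Measure.prod_restrict, Measure.restrict_univ]
    rw [this]
    filter_upwards [ae_restrict_mem (MeasurableSet.univ.prod measurableSet_Ioc)] with p hp
    by_cases hx : p.1 ∈ tsupport ψ
    · have hz : ((p.1:ℂ) + p.2 * Complex.I) ∈
          (fun p : ℝ × ℝ => ((p.1 : ℂ) + p.2 * Complex.I)) '' (tsupport ψ ×ˢ Icc a b) :=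
        ⟨p, ⟨hx, Ioc_subset_Icc_self hp.2⟩, rfl⟩
      simp only [Function.uncurry, norm_mul, Complex.norm_I, one_mul]
      exact mul_le_mul_of_nonneg_right (hM _ hz) (norm_nonneg _)
    · simp [Function.uncurry, image_eq_zero_of_notMem_tsupport hx]
  -- main computation
  have inta := integrable_slice hf.continuousOn hψc hψs ha
  have intb := integrable_slice hf.continuousOn hψc hψs (lt_of_lt_of_le ha hab)
  have step : J f ψ b - J f ψ a
      = ∫ t in a..b, (- Complex.I) * J f (deriv ψ) t := by
    calc J f ψ b - J f ψ a
        = ∫ x : ℝ, (f ((x:ℂ) + b * Complex.I) * ψ x - f ((x:ℂ) + a * Complex.I) * ψ x) :=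
          (integral_sub intb inta).symm
      _ = ∫ x : ℝ, ∫ t in Ioc a b, (Complex.I * deriv f ((x:ℂ) + t * Complex.I)) * ψ x := by
          refine integral_congr_ae (ae_of_all _ fun x => ?_)
          beta_reduce
          rw [hsub x, intervalIntegral.integral_of_le hab]
      _ = ∫ t in Ioc a b, ∫ x : ℝ, (Complex.I * deriv f ((x:ℂ) + t * Complex.I)) * ψ x :=
          integral_integral_swap hFint
      _ = ∫ t in a..b, ∫ x : ℝ, (Complex.I * deriv f ((x:ℂ) + t * Complex.I)) * ψ x :=
          (intervalIntegral.integral_of_le hab).symm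
      _ = ∫ t in a..b, (- Complex.I) * J f (deriv ψ) t := by
          refine intervalIntegral.integral_congr fun t htt => ?_
          rw [uIcc_of_le hab] at htt
          have ht : 0 < t := lt_of_lt_of_le ha htt.1
          have hIBP := ibp hf hψ hψs ht
          calc ∫ x : ℝ, (Complex.I * deriv f ((x:ℂ) + t * Complex.I)) * ψ x
              = Complex.I * ∫ x : ℝ, deriv f ((x:ℂ) + t * Complex.I) * ψ x := by
                rw [← integral_const_mul]
                simp [mul_assoc]
            _ = (- Complex.I) * J f (deriv ψ) t := by rw [hIBP, J]; ring
  rw [intervalIntegral.integral_const_mul] at step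
  linear_combination -step

lemma contJ (hf : DifferentiableOn ℂ f {z : ℂ | 0 < z.im})
    {ψ : ℝ → ℂ} (hψc : Continuous ψ) (hψs : HasCompactSupport ψ) :
    ContinuousOn (J f ψ) (Ioi 0) := by
  intro y₀ hy₀
  apply ContinuousAt.continuousWithinAt
  have hy₀' : (0:ℝ) < y₀ := hy₀
  have hSU : (fun p : ℝ × ℝ => ((p.1 : ℂ) + p.2 * Complex.I)) '' (tsupport ψ ×ˢ Icc (y₀/2) (y₀+1))
      ⊆ {z : ℂ | 0 < z.im} := by
    rintro z ⟨⟨x, t⟩, ⟨hx, htt⟩, rfl⟩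
    exact memU x t (lt_of_lt_of_le (by linarith) htt.1)
  obtain ⟨M, hM⟩ := ((IsCompact.prod hψs
    isCompact_Icc).image cont_path2).exists_bound_of_continuousOn (hf.continuousOn.mono hSU)
  have hmem : Icc (y₀/2) (y₀+1) ∈ nhds y₀ := Icc_mem_nhds (by linarith) (by linarith)
  apply continuousAt_of_dominated (bound := fun x => M * ‖ψ x‖)
  · filter_upwards [hmem] with y hy
    exact ((cont_slice hf.continuousOn (lt_of_lt_of_le (by linarith) hy.1)).mul
      hψc).aestronglyMeasurable
  · filter_upwards [hmem] with y hy
    refine ae_of_all _ fun x => ?_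
    by_cases hx : x ∈ tsupport ψ
    · have hz : ((x:ℂ) + y * Complex.I) ∈
          (fun p : ℝ × ℝ => ((p.1 : ℂ) + p.2 * Complex.I)) '' (tsupport ψ ×ˢ Icc (y₀/2) (y₀+1)) :=
        ⟨(x, y), ⟨hx, hy⟩, rfl⟩
      rw [norm_mul]
      exact mul_le_mul_of_nonneg_right (hM _ hz) (norm_nonneg _)
    · simp [image_eq_zero_of_notMem_tsupport hx]
  · exact (hψc.integrable_of_hasCompactSupport hψs).norm.const_mul M
  · refine ae_of_all _ fun x => ContinuousAt.mul ?_ continuousAt_const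
    have h1 : ContinuousAt (fun y : ℝ => ((x:ℂ) + y * Complex.I)) y₀ := by fun_prop
    have h2 : ContinuousAt f ((x:ℂ) + y₀ * Complex.I) :=
      hf.continuousOn.continuousAt (isOpenU.mem_nhds (memU x y₀ hy₀'))
    exact ContinuousAt.comp (g := f) h2 h1

lemma decay (hf : DifferentiableOn ℂ f {z : ℂ | 0 < z.im}) {C : ℝ} (hC : 0 < C) {N : ℕ}
    (hbound : ∀ z : ℂ, 0 < z.im → ‖f z‖ ≤ C / z.im ^ N) :
    ∀ (m : ℕ) (ψ : ℝ → ℂ), ContDiff ℝ (∞ : WithTop ℕ∞) ψ → HasCompactSupport ψ →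
    ∃ K : ℝ, 0 ≤ K ∧ ∀ y ∈ Ioc (0:ℝ) 1,
      ‖J f ψ y‖ ≤ K * y ^ (-((((N - m : ℕ) : ℝ)) + 1/2)) := by
  intro m
  induction m with
  | zero =>
    intro ψ hψ hψs
    simp only [Nat.sub_zero]
    have hint : (0:ℝ) ≤ ∫ x : ℝ, ‖ψ x‖ := integral_nonneg fun x => norm_nonneg _
    refine ⟨C * ∫ x : ℝ, ‖ψ x‖, by positivity, fun y hy => ?_⟩
    have hy0 : (0:ℝ) < y := hy.1
    have h1 := Jbound hbound hf.continuousOn hψ.continuous hψs hy0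
    have hdiv : C / y ^ N = C * y ^ (-(N:ℝ)) := by
      rw [Real.rpow_neg hy0.le, Real.rpow_natCast]; ring
    have hr : y ^ (-(N:ℝ)) ≤ y ^ (-(((N:ℝ)) + 1/2)) :=
      Real.rpow_le_rpow_of_exponent_ge hy0 hy.2 (by linarith)
    calc ‖J f ψ y‖ ≤ (C / y ^ N) * ∫ x : ℝ, ‖ψ x‖ := h1
      _ = (C * ∫ x : ℝ, ‖ψ x‖) * y ^ (-(N:ℝ)) := by rw [hdiv]; ring
      _ ≤ (C * ∫ x : ℝ, ‖ψ x‖) * y ^ (-(((N:ℝ)) + 1/2)) :=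
          mul_le_mul_of_nonneg_left hr (by positivity)
  | succ m ih =>
    intro ψ hψ hψs
    obtain ⟨K, hK0, hK⟩ := ih (deriv ψ) (contDiff_infty_iff_deriv.mp hψ).2 hψs.deriv
    set e : ℝ := ((N - m : ℕ) : ℝ) + 1/2 with he
    set e' : ℝ := ((N - (m+1) : ℕ) : ℝ) + 1/2 with he'
    have he'0 : 0 < e' := by
      rw [he']
      have : (0:ℝ) ≤ ((N - (m+1) : ℕ) : ℝ) := Nat.cast_nonneg _
      linarith
    clear_value e e'
    refine ⟨‖J f ψ 1‖ + 2 * K, by positivity, fun y hy => ?_⟩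
    have hy0 : (0:ℝ) < y := hy.1
    have hy1 : y ≤ 1 := hy.2
    have hone : (1:ℝ) ≤ y ^ (-e') :=
      Real.one_le_rpow_of_pos_of_le_one_of_nonpos hy0 hy1 (by linarith)
    have hid := key hf hψ hψs hy0 hy1
    have hbint : IntervalIntegrable (fun t : ℝ => t ^ (-e)) volume y 1 := by
      apply intervalIntegral.intervalIntegrable_rpow (Or.inr ?_)
      rw [uIcc_of_le hy1]
      exact fun h0 => absurd h0.1 (not_le.mpr hy0)
    have hnorm : ‖∫ t in y..1, J f (deriv ψ) t‖ ≤ |∫ t in y..1, K * t ^ (-e)| := by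
      apply intervalIntegral.norm_integral_le_abs_of_norm_le ?_ (hbint.const_mul K)
      rw [uIoc_of_le hy1]
      filter_upwards [ae_restrict_mem measurableSet_Ioc] with t ht
      exact hK t ⟨lt_trans hy0 ht.1, ht.2⟩
    -- evaluate / bound ∫ t in y..1, t ^ (-e)
    have hXbound : 0 ≤ (∫ t in y..1, t ^ (-e)) ∧ (∫ t in y..1, t ^ (-e)) ≤ 2 * y ^ (-e') := by
      rcases Nat.eq_zero_or_pos (N - m) with hnm | hnm
      · have hnm' : N - (m+1) = 0 := by omega
        have hee : e = 1/2 := by rw [he, hnm]; norm_num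
        have hee' : e' = 1/2 := by rw [he', hnm']; norm_num
        have hval : (∫ t in y..1, t ^ (-e)) = (1 ^ (-e+1) - y ^ (-e+1)) / (-e+1) :=
          integral_rpow (Or.inl (by rw [hee]; norm_num))
        rw [hval, Real.one_rpow, hee]
        have hy12 : 0 ≤ y ^ ((-(1/2):ℝ)+1) := Real.rpow_nonneg hy0.le _
        have hy12' : y ^ ((-(1/2):ℝ)+1) ≤ 1 :=
          Real.rpow_le_one hy0.le hy1 (by norm_num)
        constructor
        · exact div_nonneg (by linarith) (by norm_num)
        · have h2 : (1 - y ^ ((-(1/2):ℝ)+1)) / ((-(1/2):ℝ)+1) ≤ 2 := by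
            rw [div_le_iff₀ (by norm_num)]
            linarith
          calc (1 - y ^ ((-(1/2):ℝ)+1)) / ((-(1/2):ℝ)+1) ≤ 2 := h2
            _ = 2 * 1 := by ring
            _ ≤ 2 * y ^ (-e') := mul_le_mul_of_nonneg_left hone (by norm_num)
      · -- N - m ≥ 1
        have hcast : ((N - m : ℕ) : ℝ) = ((N - (m+1) : ℕ) : ℝ) + 1 := by
          have : N - m = (N - (m+1)) + 1 := by omega
          rw [this]; push_cast; ring
        have heq : e = e' + 1 := by rw [he, he', hcast]; ring
        have he32 : (3/2:ℝ) ≤ e := by rw [heq]; linarith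
        have hval : (∫ t in y..1, t ^ (-e)) = (1 ^ (-e+1) - y ^ (-e+1)) / (-e+1) :=
          integral_rpow (Or.inr ⟨by linarith, by
            rw [uIcc_of_le hy1]
            exact fun h0 => absurd h0.1 (not_le.mpr hy0)⟩)
        have hexp : -e + 1 = -e' := by rw [heq]; ring
        rw [hval, Real.one_rpow, hexp]
        have he'half : (1/2:ℝ) ≤ e' := by
          rw [he']
          have : (0:ℝ) ≤ ((N - (m+1):ℕ):ℝ) := Nat.cast_nonneg _
          linarith
        have hXeq : (1 - y ^ (-e')) / (-e') = (y ^ (-e') - 1) / e' := by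
          rw [div_neg]; ring
        rw [hXeq]
        constructor
        · exact div_nonneg (by linarith) he'0.le
        · rw [div_le_iff₀ he'0]
          nlinarith [mul_nonneg (by linarith : (0:ℝ) ≤ y ^ (-e')) (by linarith [he'half] : (0:ℝ) ≤ 2*e'-1)]
    obtain ⟨hX0, hX2⟩ := hXbound
    have habs : |∫ t in y..1, K * t ^ (-e)| ≤ K * (2 * y ^ (-e')) := by
      rw [intervalIntegral.integral_const_mul, abs_mul, _root_.abs_of_nonneg hK0, _root_.abs_of_nonneg hX0]
      exact mul_le_mul_of_nonneg_left hX2 hK0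
    calc ‖J f ψ y‖ = ‖J f ψ 1 + Complex.I * ∫ t in y..1, J f (deriv ψ) t‖ := by rw [hid]
      _ ≤ ‖J f ψ 1‖ + ‖Complex.I * ∫ t in y..1, J f (deriv ψ) t‖ := norm_add_le _ _
      _ = ‖J f ψ 1‖ + ‖∫ t in y..1, J f (deriv ψ) t‖ := by
          rw [norm_mul, Complex.norm_I, one_mul]
      _ ≤ ‖J f ψ 1‖ + K * (2 * y ^ (-e')) := by linarith [hnorm.trans habs]
      _ ≤ (‖J f ψ 1‖ + 2 * K) * y ^ (-e') := by
          nlinarith [hone, norm_nonneg (J f ψ 1), hK0]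

end TGBV

open TGBV in
theorem tempered_growth_has_distributional_boundary_value (f : ℂ → ℂ) (C : ℝ) (hC : 0 < C)
    (N : ℕ) (hf : DifferentiableOn ℂ f {z : ℂ | 0 < z.im})
    (hbound : ∀ z : ℂ, 0 < z.im → ‖f z‖ ≤ C / z.im ^ N) :
    ∀ φ : ℝ → ℂ, ContDiff ℝ (⊤ : ℕ∞) φ → HasCompactSupport φ →
      ∃ L : ℂ, Tendsto (fun y : ℝ => ∫ x : ℝ, f (x + y * Complex.I) * φ x)
        (nhdsWithin 0 (Set.Ioi 0)) (nhds L) := by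
  intro φ hφ hφs
  have hphi : ContDiff ℝ (∞ : WithTop ℕ∞) φ := hφ.of_le (by simp)
  have hdphi : ContDiff ℝ (∞ : WithTop ℕ∞) (deriv φ) := (contDiff_infty_iff_deriv.mp hphi).2
  obtain ⟨K, hK0, hK⟩ := decay hf hC hbound N (deriv φ) hdphi hφs.deriv
  have hKs : ∀ y ∈ Set.Ioc (0:ℝ) 1, ‖J f (deriv φ) y‖ ≤ K * y ^ (-(1/2:ℝ)) := by
    intro y hy
    have h := hK y hy
    rw [Nat.sub_self] at h
    simpa using h
  have hg : IntegrableOn (J f (deriv φ)) (Set.Ioc 0 1) volume := by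
    have haesm : AEStronglyMeasurable (J f (deriv φ)) (volume.restrict (Set.Ioc 0 1)) :=
      ((contJ hf hdphi.continuous hφs.deriv).mono Set.Ioc_subset_Ioi_self).aestronglyMeasurable
        measurableSet_Ioc
    have hbint : Integrable (fun t : ℝ => K * t ^ (-(1/2:ℝ)))
        (volume.restrict (Set.Ioc 0 1)) :=
      ((intervalIntegral.intervalIntegrable_rpow' (by norm_num)).const_mul K).1
    refine hbint.mono' haesm ?_
    rw [ae_restrict_iff' measurableSet_Ioc]
    exact ae_of_all _ hKs
  have hgIcc : IntegrableOn (J f (deriv φ)) (Set.uIcc 0 1) volume := by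
    rw [Set.uIcc_of_le zero_le_one]
    rwa [integrableOn_Icc_iff_integrableOn_Ioc]
  refine ⟨J f φ 1 + Complex.I * ∫ t in (0:ℝ)..1, J f (deriv φ) t, ?_⟩
  have hprim : ContinuousOn (fun y : ℝ => ∫ t in y..(1:ℝ), J f (deriv φ) t) (Set.uIcc 0 1) :=
    intervalIntegral.continuousOn_primitive_interval_left hgIcc
  have h0 : (0:ℝ) ∈ Set.uIcc 0 1 := Set.left_mem_uIcc
  have htd : Tendsto (fun y : ℝ => ∫ t in y..(1:ℝ), J f (deriv φ) t)
      (nhdsWithin 0 (Set.Ioi 0)) (nhds (∫ t in (0:ℝ)..1, J f (deriv φ) t)) := by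
    have hcw := hprim 0 h0
    have hle : nhdsWithin (0:ℝ) (Set.Ioi 0) ≤ nhdsWithin 0 (Set.uIcc 0 1) := by
      rw [Set.uIcc_of_le zero_le_one,
        ← nhdsWithin_Ioc_eq_nhdsGT (zero_lt_one (α := ℝ))]
      exact nhdsWithin_mono _ Set.Ioc_subset_Icc_self
    exact Tendsto.mono_left hcw hle
  have htd2 : Tendsto (fun y : ℝ => J f φ 1 + Complex.I * ∫ t in y..(1:ℝ), J f (deriv φ) t)
      (nhdsWithin 0 (Set.Ioi 0))
      (nhds (J f φ 1 + Complex.I * ∫ t in (0:ℝ)..1, J f (deriv φ) t)) :=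
    (htd.const_mul Complex.I).const_add _
  refine htd2.congr' ?_
  filter_upwards [Ioc_mem_nhdsGT_of_mem (Set.mem_Ico.mpr ⟨le_refl 0, zero_lt_one⟩)] with y hy
  exact (key hf hphi hφs hy.1 hy.2).symm
end

section
/- Let f be a bounded holomorphic function on the upper half-plane ℂ₊ that extends continuously to the closed upper half-plane. Then for all x ∈ ℝ and y > 0, f(x + iy) = (1/π) ∫_{−∞}^{∞} f(t) · y/((x − t)² + y²) dt. -/
open Complex MeasureTheory Real Filter Set intervalIntegral

lemma poisson_aux_eq (x y : ℝ) (hy : 0 < y) (t : ℝ) :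
    y / ((x - t) ^ 2 + y ^ 2) = y⁻¹ * (1 + (y⁻¹ * (t - x)) ^ 2)⁻¹ := by
  have hq : (0:ℝ) < (x - t) ^ 2 + y ^ 2 := by positivity
  field_simp
  ring

lemma poisson_aux_integrable (x y : ℝ) (hy : 0 < y) :
    Integrable (fun t : ℝ => y / ((x - t) ^ 2 + y ^ 2)) := by
  have h1 : Integrable (fun t : ℝ => (1 + t ^ 2)⁻¹) := integrable_inv_one_add_sq
  have h2 : Integrable (fun t : ℝ => (1 + (y⁻¹ * t) ^ 2)⁻¹) :=
    h1.comp_mul_left' (inv_ne_zero hy.ne')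
  have h3 : Integrable (fun t : ℝ => (1 + (y⁻¹ * (t - x)) ^ 2)⁻¹) :=
    h2.comp_sub_right x
  exact (h3.const_mul y⁻¹).congr
    (Eventually.of_forall fun t => (poisson_aux_eq x y hy t).symm)

lemma poisson_aux_integral (x y : ℝ) (hy : 0 < y) :
    ∫ t : ℝ, y / ((x - t) ^ 2 + y ^ 2) = π := by
  have h0 : (fun t : ℝ => y / ((x - t) ^ 2 + y ^ 2))
      = fun t : ℝ => y⁻¹ * (1 + (y⁻¹ * (t - x)) ^ 2)⁻¹ :=
    funext fun t => poisson_aux_eq x y hy t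
  rw [h0, MeasureTheory.integral_const_mul]
  have h1 : ∫ t : ℝ, (1 + (y⁻¹ * (t - x)) ^ 2)⁻¹
      = ∫ t : ℝ, (1 + (y⁻¹ * t) ^ 2)⁻¹ :=
    integral_sub_right_eq_self (fun t : ℝ => (1 + (y⁻¹ * t) ^ 2)⁻¹) x
  rw [h1, Measure.integral_comp_mul_left (fun t : ℝ => (1 + t ^ 2)⁻¹) y⁻¹,
    integral_univ_inv_one_add_sq]
  rw [inv_inv, abs_of_pos hy, smul_eq_mul]
  field_simp

theorem poisson_representation_bounded_holomorphic (f : ℂ → ℂ)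
    (hf : DifferentiableOn ℂ f {z : ℂ | 0 < z.im})
    (hcont : ContinuousOn f {z : ℂ | 0 ≤ z.im})
    (hbdd : ∃ M : ℝ, ∀ z : ℂ, 0 ≤ z.im → ‖f z‖ ≤ M) :
    ∀ (x y : ℝ), 0 < y →
      f (x + y * Complex.I)
        = (1 / (π : ℂ)) * ∫ t : ℝ, f (t : ℂ) * ((y / ((x - t) ^ 2 + y ^ 2) : ℝ) : ℂ) := by
  obtain ⟨M, hM⟩ := hbdd
  have hM0 : 0 ≤ M := le_trans (norm_nonneg _) (hM 0 (by simp))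
  intro x y hy
  set z : ℂ := x + y * I with hz
  have hzim : z.im = y := by simp [hz]
  have hzre : z.re = x := by simp [hz]
  set zb : ℂ := (x : ℂ) - y * I with hzb
  have hzbim : zb.im = -y := by simp [hzb]
  have hzbre : zb.re = x := by simp [hzb]
  have hupper : IsOpen {w : ℂ | 0 < w.im} := isOpen_lt continuous_const Complex.continuous_im
  have hzmem : z ∈ {w : ℂ | 0 < w.im} := by
    simp only [Set.mem_setOf_eq, hzim]; exact hy
  have hdz : DifferentiableAt ℂ f z := hf.differentiableAt (hupper.mem_nhds hzmem)
  set P : ℝ → ℝ := fun t => y / ((x - t) ^ 2 + y ^ 2) with hP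
  have hPint : Integrable P := poisson_aux_integrable x y hy
  have hPpi : ∫ t, P t = π := poisson_aux_integral x y hy
  have hq : ∀ t : ℝ, (0:ℝ) < (x - t) ^ 2 + y ^ 2 := fun t => by positivity
  have hfr : Continuous fun t : ℝ => f t :=
    hcont.comp_continuous Complex.continuous_ofReal (fun t => by simp [Set.mem_setOf_eq])
  set F : ℂ → ℂ := fun w => dslope f z w * (2 * y * I / (w - zb)) with hF
  have hden : ∀ w : ℂ, 0 ≤ w.im → w - zb ≠ 0 := by
    intro w hw h
    have h2 : (w - zb).im = w.im + y := by rw [Complex.sub_im, hzbim]; ring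
    rw [h] at h2
    simp only [Complex.zero_im] at h2
    linarith
  have hclosed_nhds : {w : ℂ | 0 ≤ w.im} ∈ nhds z :=
    Filter.mem_of_superset (hupper.mem_nhds hzmem) (fun w hw => le_of_lt (Set.mem_setOf_eq ▸ hw))
  have hdsc : ContinuousOn (dslope f z) {w : ℂ | 0 ≤ w.im} :=
    (continuousOn_dslope hclosed_nhds).2 ⟨hcont, hdz⟩
  have hFcont : ContinuousOn F {w : ℂ | 0 ≤ w.im} := by
    apply hdsc.mul
    exact continuousOn_const.div (continuousOn_id.sub continuousOn_const)
      (fun w hw => hden w hw)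
  have hFdiff : ∀ w : ℂ, 0 < w.im → w ≠ z → DifferentiableAt ℂ F w := by
    intro w hw hwz
    have h1 : DifferentiableAt ℂ (dslope f z) w :=
      (differentiableAt_dslope_of_ne hwz).2 (hf.differentiableAt (hupper.mem_nhds hw))
    have h2 : DifferentiableAt ℂ (fun w => 2 * (y:ℂ) * I / (w - zb)) w :=
      (differentiableAt_const _).div ((differentiableAt_id).sub (differentiableAt_const _))
        (hden w hw.le)
    exact h1.mul h2
  -- pointwise bound on F
  have habs : ∀ w : ℂ, 0 ≤ w.im → w ≠ z →
      ‖F w‖ ≤ 4 * M * y / (‖w - z‖ * ‖w - zb‖) := by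
    intro w hw hwz
    have h1 : ‖f w - f z‖ ≤ 2 * M := by
      calc ‖f w - f z‖ ≤ ‖f w‖ + ‖f z‖ := norm_sub_le _ _
        _ ≤ M + M := add_le_add (hM w hw) (hM z (by rw [hzim]; exact hy.le))
        _ = 2 * M := by ring
    have hz1 : (0:ℝ) < ‖w - z‖ := by
      rw [norm_pos_iff, sub_ne_zero]; exact hwz
    have hz2 : (0:ℝ) < ‖w - zb‖ := by
      rw [norm_pos_iff]; exact hden w hw
    have hFw : F w = (f w - f z) / (w - z) * (2 * y * I / (w - zb)) := by
      rw [hF]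
      simp only [dslope_of_ne f hwz, slope_def_field]
    rw [hFw]
    have hnorm : ‖(f w - f z) / (w - z) * (2 * (y:ℂ) * I / (w - zb))‖
        = ‖f w - f z‖ * (2 * y) / (‖w - z‖ * ‖w - zb‖) := by
      simp only [norm_mul, norm_div, Complex.norm_real, Real.norm_eq_abs,
        Complex.norm_I, Complex.norm_two, abs_of_pos hy]
      ring
    rw [hnorm]
    have h2M : ‖f w - f z‖ * (2 * y) ≤ 4 * M * y := by nlinarith [hy.le]
    exact div_le_div_of_nonneg_right h2M (by positivity) |>.trans_eq rfl
  -- F on the real axis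
  have hkey : ∀ t : ℝ, ((t:ℂ) - z) * ((t:ℂ) - zb) = (((x - t) ^ 2 + y ^ 2 : ℝ) : ℂ) := by
    intro t
    rw [hz, hzb]
    push_cast
    have hI : (I:ℂ) ^ 2 = -1 := Complex.I_sq
    ring_nf
    rw [hI]
    ring
  set G : ℝ → ℂ := fun t => (f t - f z) * (2 * I) * ((P t : ℝ) : ℂ) with hG
  have hFG : ∀ t : ℝ, F t = G t := by
    intro t
    have htz : (t : ℂ) ≠ z := by
      intro h
      have : ((t:ℂ)).im = z.im := by rw [h]
      rw [hzim, Complex.ofReal_im] at this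
      exact hy.ne this
    have hqne : (((x - t) ^ 2 + y ^ 2 : ℝ) : ℂ) ≠ 0 := by
      exact_mod_cast (hq t).ne'
    rw [hF, hG]
    simp only [dslope_of_ne f htz, slope_def_field]
    rw [div_mul_div_comm, hP]
    rw [show ((t:ℂ) - z) * ((t:ℂ) - zb) = (((x - t) ^ 2 + y ^ 2 : ℝ) : ℂ) from hkey t]
    rw [Complex.ofReal_div]
    field_simp
  -- integrability of G
  have hGint : Integrable G := by
    have h1 : Integrable (fun t : ℝ => ((P t : ℝ) : ℂ)) := hPint.ofReal
    have h2 : AEStronglyMeasurable (fun t : ℝ => (f t - f z) * (2 * I)) volume :=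
      ((hfr.sub continuous_const).mul continuous_const).aestronglyMeasurable
    have h3 : ∃ C, ∀ t : ℝ, ‖(f t - f z) * (2 * I)‖ ≤ C := by
      refine ⟨4 * M, fun t => ?_⟩
      have hb : ‖f t - f z‖ ≤ 2 * M := by
        calc ‖f t - f z‖ ≤ ‖f t‖ + ‖f z‖ := norm_sub_le _ _
          _ ≤ M + M := add_le_add (hM t (by simp)) (hM z (by rw [hzim]; exact hy.le))
          _ = 2 * M := by ring
      have : ‖(2 * I : ℂ)‖ = 2 := by
        simp
      rw [norm_mul, this]
      nlinarith
    exact h1.bdd_mul (c := h3.choose) h2 (Eventually.of_forall h3.choose_spec)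
  -- the truncated integral
  set S : ℝ → ℂ := fun R => ∫ t in (-R)..R, G t with hS
  have htend1 : Tendsto S atTop (nhds (∫ t, G t)) :=
    intervalIntegral_tendsto_integral hGint tendsto_neg_atTop_atBot tendsto_id
  -- eventual bound on S via the rectangle contour
  have hbound : ∀ᶠ R in atTop, ‖S R‖ ≤ 64 * M * y / R := by
    filter_upwards [eventually_ge_atTop (2 * |x| + 2 * y + 1)] with R hR
    have hxabs : (0:ℝ) ≤ |x| := abs_nonneg x
    have hR1 : (1:ℝ) ≤ R := by linarith
    have hR0 : (0:ℝ) < R := by linarith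
    have hRx : 2 * |x| ≤ R := by linarith
    have hRy : 2 * y ≤ R := by linarith
    have hyR : y < R := by linarith
    -- the rectangle theorem
    have hrect := integral_boundary_rect_eq_zero_of_differentiable_on_off_countable F
      (((-R : ℝ) : ℂ)) (((R : ℝ) : ℂ) + ((R : ℝ) : ℂ) * I) {z} (Set.countable_singleton z)
      ?_ ?_
    rotate_left
    · -- continuity on the closed rectangle
      apply hFcont.mono
      intro w hw
      rw [Complex.mem_reProdIm] at hw
      obtain ⟨-, hw2⟩ := hw
      simp only [Complex.ofReal_im, Complex.add_im, Complex.mul_im, Complex.I_im,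
        Complex.ofReal_re, Complex.I_re, mul_zero, mul_one, zero_add, add_zero,
        Complex.mul_re, zero_mul, sub_zero] at hw2
      have h0R : (0:ℝ) ≤ R := hR0.le
      rw [Set.uIcc_of_le h0R] at hw2
      exact hw2.1
    · -- differentiability off {z}
      intro w hw
      obtain ⟨hw1, hw2⟩ := hw
      rw [Complex.mem_reProdIm] at hw1
      obtain ⟨-, hwim⟩ := hw1
      simp only [Complex.ofReal_im, Complex.add_im, Complex.mul_im, Complex.I_im,
        Complex.ofReal_re, Complex.I_re, mul_zero, mul_one, zero_add, add_zero,
        Complex.mul_re, zero_mul, sub_zero] at hwim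
      rw [min_def, max_def] at hwim
      have him : w.im ∈ Set.Ioo 0 R := by
        simpa [hR0.le] using hwim
      exact hFdiff w him.1 (by simpa using hw2)
    -- normalize the rectangle identity
    simp only [Complex.ofReal_neg, Complex.neg_re, Complex.ofReal_re, Complex.add_re,
      Complex.mul_re, Complex.I_re, Complex.I_im, Complex.ofReal_im, mul_zero, mul_one,
      zero_mul, sub_zero, add_zero, Complex.neg_im, Complex.add_im, Complex.mul_im,
      zero_add, neg_zero, Complex.ofReal_zero, zero_mul, smul_eq_mul] at hrect
    -- identify the bottom edge with S R
    have hbot : (∫ t in (-R)..R, F ((t : ℝ) : ℂ)) = S R := by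
      rw [hS]
      exact intervalIntegral.integral_congr fun t _ => hFG t
    rw [hbot] at hrect
    -- name the other three edges
    set T : ℂ := ∫ t in (-R)..R, F ((t : ℝ) + (R:ℝ) * I) with hT
    set Rt : ℂ := ∫ s in (0:ℝ)..R, F ((R:ℝ) + (s:ℝ) * I) with hRt
    set Lt : ℂ := ∫ s in (0:ℝ)..R, F (-(R:ℂ) + (s:ℝ) * I) with hLt
    have hSR : S R = T - I * Rt + I * Lt := by linear_combination hrect
    -- bounds on each edge
    have hhalf : (0:ℝ) < R / 2 := by linarith
    have hCb : (0:ℝ) ≤ 4 * M * y := by positivity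
    have hedge : ∀ w : ℂ, 0 ≤ w.im → w ≠ z → R / 2 ≤ ‖w - z‖ →
        R / 2 ≤ ‖w - zb‖ → ‖F w‖ ≤ 16 * M * y / R ^ 2 := by
      intro w hw hwz h1 h2
      refine (habs w hw hwz).trans ?_
      have : 4 * M * y / (‖w - z‖ * ‖w - zb‖)
          ≤ 4 * M * y / (R / 2 * (R / 2)) := by
        apply div_le_div_of_nonneg_left hCb (by positivity)
        exact mul_le_mul h1 h2 hhalf.le (by positivity)
      refine this.trans_eq ?_
      field_simp
      ring
    have hTb : ‖T‖ ≤ 16 * M * y / R ^ 2 * |R - (-R)| := by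
      rw [hT]
      apply intervalIntegral.norm_integral_le_of_norm_le_const
      intro t ht
      set w : ℂ := (t : ℝ) + (R:ℝ) * I with hw
      have hwim : w.im = R := by simp [hw]
      have hwre : w.re = t := by simp [hw]
      have hwz : w ≠ z := by
        intro h
        have := congrArg Complex.im h
        rw [hwim, hzim] at this
        linarith
      apply hedge w (by rw [hwim]; exact hR0.le) hwz
      · calc R / 2 ≤ R - y := by linarith
          _ = |(w - z).im| := by
            rw [Complex.sub_im, hwim, hzim, _root_.abs_of_nonneg (by linarith)]
          _ ≤ ‖w - z‖ := Complex.abs_im_le_norm _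
      · calc R / 2 ≤ R + y := by linarith
          _ = |(w - zb).im| := by
            rw [Complex.sub_im, hwim, hzbim, _root_.abs_of_nonneg (by linarith)]
            ring
          _ ≤ ‖w - zb‖ := Complex.abs_im_le_norm _
    have hRtb : ‖Rt‖ ≤ 16 * M * y / R ^ 2 * |R - 0| := by
      rw [hRt]
      apply intervalIntegral.norm_integral_le_of_norm_le_const
      intro s hs
      have hs' : s ∈ Set.Ioc 0 R := by
        rwa [Set.uIoc_of_le hR0.le] at hs
      set w : ℂ := ((R:ℝ) : ℂ) + (s : ℝ) * I with hw
      have hwim : w.im = s := by simp [hw]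
      have hwre : w.re = R := by simp [hw]
      have hwz : w ≠ z := by
        intro h
        have := congrArg Complex.re h
        rw [hwre, hzre] at this
        have : |x| = R := by rw [← this]; exact (abs_of_pos hR0).symm ▸ abs_of_pos hR0
        linarith [abs_nonneg x]
      apply hedge w (by rw [hwim]; exact hs'.1.le) hwz
      · calc R / 2 ≤ R - |x| := by linarith
          _ ≤ |R - x| := by
            rcases abs_cases x with ⟨h1, h2⟩ | ⟨h1, h2⟩ <;>
              rcases abs_cases (R - x) with ⟨h3, h4⟩ | ⟨h3, h4⟩ <;> linarith
          _ = |(w - z).re| := by rw [Complex.sub_re, hwre, hzre]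
          _ ≤ ‖w - z‖ := Complex.abs_re_le_norm _
      · calc R / 2 ≤ R - |x| := by linarith
          _ ≤ |R - x| := by
            rcases abs_cases x with ⟨h1, h2⟩ | ⟨h1, h2⟩ <;>
              rcases abs_cases (R - x) with ⟨h3, h4⟩ | ⟨h3, h4⟩ <;> linarith
          _ = |(w - zb).re| := by rw [Complex.sub_re, hwre, hzbre]
          _ ≤ ‖w - zb‖ := Complex.abs_re_le_norm _
    have hLtb : ‖Lt‖ ≤ 16 * M * y / R ^ 2 * |R - 0| := by
      rw [hLt]
      apply intervalIntegral.norm_integral_le_of_norm_le_const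
      intro s hs
      have hs' : s ∈ Set.Ioc 0 R := by
        rwa [Set.uIoc_of_le hR0.le] at hs
      set w : ℂ := -(R:ℂ) + (s : ℝ) * I with hw
      have hwim : w.im = s := by simp [hw]
      have hwre : w.re = -R := by simp [hw]
      have hwz : w ≠ z := by
        intro h
        have := congrArg Complex.re h
        rw [hwre, hzre] at this
        have hax : |x| ≥ R := by rw [← this]; simp [abs_of_pos hR0]
        linarith
      apply hedge w (by rw [hwim]; exact hs'.1.le) hwz
      · calc R / 2 ≤ R - |x| := by linarith
          _ ≤ |-R - x| := by
            rcases abs_cases x with ⟨h1, h2⟩ | ⟨h1, h2⟩ <;>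
              rcases abs_cases (-R - x) with ⟨h3, h4⟩ | ⟨h3, h4⟩ <;> linarith
          _ = |(w - z).re| := by rw [Complex.sub_re, hwre, hzre]
          _ ≤ ‖w - z‖ := Complex.abs_re_le_norm _
      · calc R / 2 ≤ R - |x| := by linarith
          _ ≤ |-R - x| := by
            rcases abs_cases x with ⟨h1, h2⟩ | ⟨h1, h2⟩ <;>
              rcases abs_cases (-R - x) with ⟨h3, h4⟩ | ⟨h3, h4⟩ <;> linarith
          _ = |(w - zb).re| := by rw [Complex.sub_re, hwre, hzbre]
          _ ≤ ‖w - zb‖ := Complex.abs_re_le_norm _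
    -- combine
    have hnormI : ∀ v : ℂ, ‖I * v‖ = ‖v‖ := by
      intro v; rw [norm_mul, Complex.norm_I, one_mul]
    calc ‖S R‖ = ‖T - I * Rt + I * Lt‖ := by rw [hSR]
      _ ≤ ‖T - I * Rt‖ + ‖I * Lt‖ := norm_add_le _ _
      _ ≤ ‖T‖ + ‖I * Rt‖ + ‖I * Lt‖ := by
          have := norm_sub_le T (I * Rt)
          linarith
      _ = ‖T‖ + ‖Rt‖ + ‖Lt‖ := by rw [hnormI, hnormI]
      _ ≤ 16 * M * y / R ^ 2 * |R - (-R)| + 16 * M * y / R ^ 2 * |R - 0|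
            + 16 * M * y / R ^ 2 * |R - 0| := by linarith
      _ = 64 * M * y / R := by
          rw [sub_zero, sub_neg_eq_add, abs_of_pos hR0, abs_of_pos (by linarith : (0:ℝ) < R + R)]
          field_simp
          ring
  have hlim : Tendsto (fun R : ℝ => 64 * M * y / R) atTop (nhds 0) :=
    Tendsto.div_atTop tendsto_const_nhds tendsto_id
  have htend0 : Tendsto S atTop (nhds 0) := squeeze_zero_norm' hbound hlim
  have hG0 : (∫ t, G t) = 0 := tendsto_nhds_unique htend1 htend0
  -- linearity to conclude
  have hfim : ∀ t : ℝ, (0:ℝ) ≤ ((t:ℂ)).im := fun t => by simp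
  have hint1 : Integrable (fun t : ℝ => f t * ((P t : ℝ) : ℂ)) :=
    hPint.ofReal.bdd_mul hfr.aestronglyMeasurable
      (Eventually.of_forall fun t => by exact hM t (hfim t))
  have hint1' : Integrable (fun t : ℝ => f t * ((P t : ℝ) : ℂ) * (2 * I)) :=
    hint1.mul_const _
  have hint2 : Integrable (fun t : ℝ => f z * ((P t : ℝ) : ℂ) * (2 * I)) :=
    (hPint.ofReal.const_mul (f z)).mul_const _
  have hGsplit : ∀ t : ℝ, G t = f t * ((P t : ℝ) : ℂ) * (2 * I)
      - f z * ((P t : ℝ) : ℂ) * (2 * I) := by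
    intro t; rw [hG]; ring
  have h5 : (∫ t, G t) = (∫ t : ℝ, f t * ((P t : ℝ) : ℂ) * (2 * I))
      - ∫ t : ℝ, f z * ((P t : ℝ) : ℂ) * (2 * I) := by
    rw [show G = fun t : ℝ => f t * ((P t : ℝ) : ℂ) * (2 * I)
      - f z * ((P t : ℝ) : ℂ) * (2 * I) from funext hGsplit]
    exact integral_sub hint1' hint2
  have hPC : (∫ t : ℝ, ((P t : ℝ) : ℂ)) = (π : ℂ) := by
    have h0 : (∫ t : ℝ, ((P t : ℝ) : ℂ)) = ((∫ t : ℝ, P t : ℝ) : ℂ) :=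
      _root_.integral_ofReal
    rw [h0, hPpi]
  have h6 : (∫ t : ℝ, f t * ((P t : ℝ) : ℂ) * (2 * I))
      = (∫ t : ℝ, f t * ((P t : ℝ) : ℂ)) * (2 * I) := integral_mul_const _ _
  have h7 : (∫ t : ℝ, f z * ((P t : ℝ) : ℂ) * (2 * I)) = f z * (π : ℂ) * (2 * I) := by
    rw [MeasureTheory.integral_mul_const, MeasureTheory.integral_const_mul, hPC]
  rw [h5, h6, h7] at hG0
  have hmain : (∫ t : ℝ, f t * ((P t : ℝ) : ℂ)) = f z * (π : ℂ) := by
    have h2I : (2 * I : ℂ) ≠ 0 := by simp [Complex.I_ne_zero]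
    have := sub_eq_zero.mp hG0
    exact mul_right_cancel₀ h2I this
  have hpine : (π : ℂ) ≠ 0 := by
    exact_mod_cast Real.pi_ne_zero
  rw [hmain]
  field_simp
end

section
/- Let f ∈ ℂ, let ζ be a nonzero complex number in the closed unit disk, z in the open unit disk with ζ ≠ z and z·conj(ζ) ≠ 1, and n ≥ 1 an integer. Then the kernel K_n(ζ, z) := [(f/ζ)·(ζ+z)/(ζ−z) + (conj(f)/conj(ζ))·(1+z·conj(ζ))/(1−z·conj(ζ))]·(ζ − z + conj(ζ − z))^{n−1} is purely imaginary whenever |z| = 1, since (ζ − z + conj(ζ − z))^{n−1} is real. -/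
/-!
On the unit circle `z * conj z = 1`, so multiplying numerator and denominator by `z` turns
`(1 + z conj ζ) / (1 - z conj ζ)` into `-conj ((ζ + z) / (ζ - z))`. The bracket is therefore
`w - conj w` with `w = (f / ζ) (ζ + z) / (ζ - z)`, which is purely imaginary, while
`ζ - z + conj (ζ - z) = 2 Re (ζ - z)` is real, and so is its power.
-/

open Complex ComplexConjugate

theorem Complex.one_add_mul_conj_div_one_sub_mul_conj {z : ℂ} (hz : ‖z‖ = 1) (ζ : ℂ) :
    (1 + z * conj ζ) / (1 - z * conj ζ) = -conj ((ζ + z) / (ζ - z)) := by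
  have hz0 : z ≠ 0 := norm_ne_zero_iff.mp (hz ▸ one_ne_zero)
  have hzz : z * conj z = 1 := by rw [mul_conj, normSq_eq_norm_sq, hz]; norm_num
  rw [map_div₀, map_add, map_sub, ← mul_div_mul_left (conj ζ + conj z) _ hz0, mul_add, mul_sub,
    hzz, ← div_neg, neg_sub, add_comm]

theorem Complex.schwarz_bracket_eq_sub_conj (f ζ : ℂ) {z : ℂ} (hz : ‖z‖ = 1) :
    f / ζ * (ζ + z) / (ζ - z) + conj f / conj ζ * (1 + z * conj ζ) / (1 - z * conj ζ) =
      f / ζ * ((ζ + z) / (ζ - z)) - conj (f / ζ * ((ζ + z) / (ζ - z))) := by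
  rw [mul_div_assoc, mul_div_assoc, one_add_mul_conj_div_one_sub_mul_conj hz, map_mul,
    map_div₀ conj f, mul_neg, ← sub_eq_add_neg]

theorem iterated_schwarz_kernel_imaginary_general (f ζ z : ℂ) (n : ℕ) :
    ‖z‖ = 1 →
      ((ζ - z) + (starRingEnd ℂ) (ζ - z)).im = 0 ∧
      (((f / ζ) * (ζ + z) / (ζ - z)
          + ((starRingEnd ℂ) f / (starRingEnd ℂ) ζ) * (1 + z * (starRingEnd ℂ) ζ)
              / (1 - z * (starRingEnd ℂ) ζ))
        * ((ζ - z) + (starRingEnd ℂ) (ζ - z)) ^ (n - 1)).re = 0 := by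
  intro hz
  rw [schwarz_bracket_eq_sub_conj f ζ hz, add_conj, ← ofReal_pow, re_mul_ofReal]
  exact ⟨ofReal_im _, by rw [sub_re, conj_re, sub_self, zero_mul]⟩

theorem iterated_schwarz_kernel_imaginary (f ζ z : ℂ) (n : ℕ) (hn : 1 ≤ n)
    (hζ0 : ζ ≠ 0) (hζ : ‖ζ‖ ≤ 1) (hζz : ζ ≠ z)
    (h1 : z * (starRingEnd ℂ) ζ ≠ 1) :
    ‖z‖ = 1 →
      ((ζ - z) + (starRingEnd ℂ) (ζ - z)).im = 0 ∧
      (((f / ζ) * (ζ + z) / (ζ - z)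
          + ((starRingEnd ℂ) f / (starRingEnd ℂ) ζ) * (1 + z * (starRingEnd ℂ) ζ)
              / (1 - z * (starRingEnd ℂ) ζ))
        * ((ζ - z) + (starRingEnd ℂ) (ζ - z)) ^ (n - 1)).re = 0 :=
  iterated_schwarz_kernel_imaginary_general f ζ z n
end
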